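/- arXiv:2404.13647 — 6 statements merged into one kernel-verified Lean document; each statement's English description precedes it below -/
import Mathlib

section
/- For any aggregator RAgg mapping W vectors in R^D to a vector in R^D, if the fraction of poisoned workers δ = 1 - R/W satisfies δ ≥ 1/2, then there exist W messages y_1,...,y_W ∈ R^D such that ‖RAgg(y_1,...,y_W) - ȳ‖ > ρ · max_{w∈R} ‖y_w - ȳ‖ for any ρ ≥ 0, where ȳ is the average of the R regular messages. (That is, no ρ-robust aggregator exists when δ ≥ 1/2.) -/
/-- If the fraction of poisoned workers `δ = 1 - R/W` satisfies `δ ≥ 1/2`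
(i.e. `2R ≤ W`), then for any aggregator `RAgg : (ℝ^D)^W → ℝ^D` and any `ρ ≥ 0` there exist
`W` messages `y` and a regular set `S` of cardinality `R` such that
`‖RAgg y - ȳ‖ > ρ · max_{w ∈ S} ‖y w - ȳ‖`, where `ȳ` is the average of the regular messages.
Hence no `ρ`-robust aggregator exists when `δ ≥ 1/2`. -/
theorem stmt_0 (W D R : ℕ) (hD : 1 ≤ D) (hR : 1 ≤ R) (hRW : 2 * R ≤ W)
    (RAgg : (Fin W → EuclideanSpace ℝ (Fin D)) → EuclideanSpace ℝ (Fin D))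
    (ρ : ℝ) (hρ : 0 ≤ ρ) :
    ∃ (S : Finset (Fin W)) (y : Fin W → EuclideanSpace ℝ (Fin D)) (hS : S.Nonempty),
      S.card = R ∧
      ‖RAgg y - (R : ℝ)⁻¹ • ∑ w ∈ S, y w‖ >
        ρ * S.sup' hS (fun w => ‖y w - (R : ℝ)⁻¹ • ∑ v ∈ S, y v‖) := by
  set b : EuclideanSpace ℝ (Fin D) := EuclideanSpace.single (⟨0, by omega⟩ : Fin D) (1:ℝ)
    with hb
  have hbnorm : ‖b‖ = 1 := by simp [hb, EuclideanSpace.norm_single]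
  have hbne : b ≠ 0 := by
    intro h; rw [h] at hbnorm; simp at hbnorm
  set y : Fin W → EuclideanSpace ℝ (Fin D) := fun w => if (w : ℕ) < R then 0 else b with hy
  have hRne : (R : ℝ) ≠ 0 := Nat.cast_ne_zero.mpr (by omega)
  have h1 : ∀ n ∈ Finset.range R, n < W := fun n hn => by
    have := Finset.mem_range.mp hn; omega
  have h2 : ∀ n ∈ Finset.Ico R (2 * R), n < W := fun n hn => by
    have := Finset.mem_Ico.mp hn; omega
  by_cases hcase : RAgg y = 0
  · -- use S2 : the second block, where y = b, average = b ≠ 0 = RAgg y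
    refine ⟨(Finset.Ico R (2 * R)).attachFin h2, y, ?_, ?_, ?_⟩
    · rw [← Finset.card_pos, Finset.card_attachFin]; simp; omega
    · rw [Finset.card_attachFin]; simp [Nat.two_mul]
    · have hmem : ∀ w ∈ (Finset.Ico R (2 * R)).attachFin h2, y w = b := by
        intro w hw
        have := Finset.mem_Ico.mp ((Finset.mem_attachFin _).mp hw)
        simp [hy, Nat.not_lt.mpr this.1]
      have hsum : ∑ w ∈ (Finset.Ico R (2 * R)).attachFin h2, y w = (R : ℝ) • b := by
        rw [Finset.sum_congr rfl hmem, Finset.sum_const, Finset.card_attachFin]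
        rw [Nat.card_Ico]
        rw [show 2 * R - R = R by omega, ← Nat.cast_smul_eq_nsmul ℝ]
      have havg : (R : ℝ)⁻¹ • ∑ w ∈ (Finset.Ico R (2 * R)).attachFin h2, y w = b := by
        rw [hsum, smul_smul, inv_mul_cancel₀ hRne, one_smul]
      rw [havg]
      have hsup : ∀ hS, ((Finset.Ico R (2 * R)).attachFin h2).sup' hS
          (fun w => ‖y w - b‖) = 0 := by
        intro hS
        apply le_antisymm
        · exact Finset.sup'_le _ _ fun w hw => by rw [hmem w hw]; simp
        · obtain ⟨w, hw⟩ := hS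
          calc (0:ℝ) = ‖y w - b‖ := by rw [hmem w hw]; simp
          _ ≤ _ := Finset.le_sup' (fun w => ‖y w - _‖) hw
      rw [hsup, mul_zero, hcase, zero_sub, norm_neg]
      exact norm_pos_iff.mpr hbne
  · -- use S1 : the first block, where y = 0, average = 0 ≠ RAgg y
    refine ⟨(Finset.range R).attachFin h1, y, ?_, ?_, ?_⟩
    · rw [← Finset.card_pos, Finset.card_attachFin, Finset.card_range]; omega
    · rw [Finset.card_attachFin, Finset.card_range]
    · have hmem : ∀ w ∈ (Finset.range R).attachFin h1, y w = 0 := by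
        intro w hw
        have := Finset.mem_range.mp ((Finset.mem_attachFin _).mp hw)
        simp [hy, this]
      have hsum : ∑ w ∈ (Finset.range R).attachFin h1, y w = 0 :=
        Finset.sum_eq_zero hmem
      have havg : (R : ℝ)⁻¹ • ∑ w ∈ (Finset.range R).attachFin h1, y w = 0 := by
        rw [hsum, smul_zero]
      rw [havg]
      have hsup : ∀ hS, ((Finset.range R).attachFin h1).sup' hS
          (fun w => ‖y w - (0 : EuclideanSpace ℝ (Fin D))‖) = 0 := by
        intro hS
        apply le_antisymm
        · exact Finset.sup'_le _ _ fun w hw => by rw [hmem w hw]; simp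
        · obtain ⟨w, hw⟩ := hS
          calc (0:ℝ) = ‖y w - (0 : EuclideanSpace ℝ (Fin D))‖ := by rw [hmem w hw]; simp
          _ ≤ _ := Finset.le_sup' (fun w => ‖y w - _‖) hw
      rw [hsup, mul_zero, sub_zero]
      exact norm_pos_iff.mpr hcase
end

section
/- For any aggregator RAgg on W real-valued messages with poisoned fraction δ = 1 - R/W < 1/2, if ρ < min{δ/(1-2δ), 1}, then there exist W messages y_1,...,y_W ∈ R such that ‖RAgg(y_1,...,y_W) - ȳ‖ > ρ · max_{w∈R} ‖y_w - ȳ‖, where ȳ is the average over the R regular workers. Hence a ρ-robust aggregator exists only if ρ ≥ min{δ/(1-2δ), 1}. -/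
/-- For scalar messages, with poisoned fraction `δ = 1 - R/W < 1/2`
(i.e. `W < 2R`), if `0 ≤ ρ < min {δ/(1-2δ), 1}`, then for any aggregator there exist `W`
messages and a regular set `S` of cardinality `R` on which the `ρ`-robustness inequality fails.
Hence a `ρ`-robust aggregator exists only if `ρ ≥ min {δ/(1-2δ), 1}`. -/
theorem stmt_1 (W R : ℕ) (hR : 1 ≤ R) (hRW : R ≤ W) (hδ : W < 2 * R)
    (RAgg : (Fin W → ℝ) → ℝ) (ρ : ℝ) (hρ : 0 ≤ ρ)
    (hρlt : ρ < min ((1 - (R : ℝ) / W) / (1 - 2 * (1 - (R : ℝ) / W))) 1) :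
    ∃ (S : Finset (Fin W)) (y : Fin W → ℝ) (hS : S.Nonempty),
      S.card = R ∧
      |RAgg y - (R : ℝ)⁻¹ * ∑ w ∈ S, y w| >
        ρ * S.sup' hS (fun w => |y w - (R : ℝ)⁻¹ * ∑ v ∈ S, y v|) := by
  have hWpos : 0 < W := lt_of_lt_of_le hR hRW
  have hWR : (0:ℝ) < W := by exact_mod_cast hWpos
  have hRR : (0:ℝ) < R := by exact_mod_cast hR
  have hρ1 : ρ < 1 := lt_of_lt_of_le hρlt (min_le_right _ _)
  have hRltW : R < W := by
    rcases lt_or_eq_of_le hRW with h | h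
    · exact h
    · exfalso
      have h1 : (R:ℝ)/W = 1 := by rw [h]; field_simp
      have h2 := lt_of_lt_of_le hρlt (min_le_left _ _)
      rw [h1] at h2
      norm_num at h2
      linarith
  set B := W - R with hBdef
  have hB1 : 1 ≤ B := by omega
  have hBR : B < R := by omega
  have hbcast : (B:ℝ) = (W:ℝ) - R := by
    rw [hBdef, Nat.cast_sub hRW]
  have hbpos : (0:ℝ) < B := by exact_mod_cast hB1
  have hbltR : (B:ℝ) < R := by exact_mod_cast hBR
  -- main numeric inequality : ρ * (R - B) < B
  have hmain : ρ * ((R:ℝ) - B) < (B:ℝ) := by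
    have hδeq : 1 - (R:ℝ)/W = B/W := by
      rw [hbcast]; field_simp
    have hW2R : (W:ℝ) < 2*R := by exact_mod_cast hδ
    have hD : (0:ℝ) < 1 - 2 * (1 - (R:ℝ)/W) := by
      rw [hδeq]
      have hhalf : (B:ℝ)/W < 1/2 := by
        rw [div_lt_div_iff₀ hWR (by norm_num), hbcast]; linarith
      linarith
    have h := lt_of_lt_of_le hρlt (min_le_left _ _)
    rw [lt_div_iff₀ hD, hδeq] at h
    have hmul := mul_lt_mul_of_pos_right h hWR
    have e1 : ρ * (1 - 2 * ((B:ℝ)/W)) * W = ρ * ((W:ℝ) - 2*B) := by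
      field_simp
    have e2 : (B:ℝ)/W * W = B := by field_simp
    rw [e1, e2] at hmul
    have e3 : (R:ℝ) - B = (W:ℝ) - 2*B := by rw [hbcast]; ring
    rw [e3]; exact hmul
  -- the adversarial input: first B workers say 1, the rest say 0
  set y : Fin W → ℝ := fun w => if (w:ℕ) < B then 1 else 0 with hy
  by_cases hz : RAgg y = 0
  · -- regular set = first R workers; their mean is B/R but aggregator outputs 0
    have hne : (Finset.Iio (⟨R, hRltW⟩ : Fin W)).Nonempty :=
      ⟨⟨0, by omega⟩, by simp [Finset.mem_Iio, Fin.lt_def]; omega⟩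
    refine ⟨Finset.Iio ⟨R, hRltW⟩, y, hne, ?_, ?_⟩
    · simp [Fin.card_Iio]
    · have hfilter : (Finset.Iio (⟨R, hRltW⟩ : Fin W)).filter (fun (w : Fin W) => (w:ℕ) < B) =
          Finset.Iio (⟨B, by omega⟩ : Fin W) := by
        ext w
        simp only [Finset.mem_filter, Finset.mem_Iio, Fin.lt_def]
        omega
      have hsum : ∑ w ∈ Finset.Iio (⟨R, hRltW⟩ : Fin W), y w = B := by
        calc ∑ w ∈ Finset.Iio (⟨R, hRltW⟩ : Fin W), y w
            = ∑ w ∈ (Finset.Iio (⟨R, hRltW⟩ : Fin W)).filter (fun (w : Fin W) => (w:ℕ) < B),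
                (1:ℝ) := (Finset.sum_filter _ _).symm
          _ = (B:ℝ) := by rw [hfilter]; simp [Fin.card_Iio]
      rw [hsum, hz]
      set m : ℝ := (R:ℝ)⁻¹ * B with hm
      have hmdiv : m = (B:ℝ)/R := by rw [hm, inv_mul_eq_div]
      have hm0 : 0 < m := by rw [hmdiv]; positivity
      have hm1 : m < 1 := by rw [hmdiv, div_lt_one hRR]; exact hbltR
      have hsup : (Finset.Iio (⟨R, hRltW⟩ : Fin W)).sup' hne
          (fun w => |y w - m|) ≤ max (1 - m) m := by
        apply Finset.sup'_le
        intro w _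
        rw [hy]
        by_cases hwB : (w:ℕ) < B
        · simp only [hwB, if_pos]
          rw [abs_of_nonneg (by linarith)]
          exact le_max_left _ _
        · simp only [hwB, if_neg, not_false_iff]
          rw [zero_sub, abs_neg, abs_of_pos hm0]
          exact le_max_right _ _
      have hlt : ρ * max (1 - m) m < m := by
        rcases le_total (1 - m) m with h | h
        · rw [max_eq_right h]
          nlinarith
        · rw [max_eq_left h]
          have e : 1 - m = ((R:ℝ) - B)/R := by rw [hmdiv]; field_simp
          rw [e, hmdiv, ← mul_div_assoc]
          exact div_lt_div_of_pos_right hmain hRR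
      have habs : |0 - m| = m := by rw [zero_sub, abs_neg, abs_of_pos hm0]
      rw [gt_iff_lt, habs]
      calc ρ * _ ≤ ρ * max (1 - m) m := mul_le_mul_of_nonneg_left hsup hρ
        _ < m := hlt
  · -- regular set = last R workers; all say 0, so the mean and deviations are 0
    have hne : (Finset.Ici (⟨B, by omega⟩ : Fin W)).Nonempty :=
      ⟨⟨B, by omega⟩, Finset.mem_Ici.mpr le_rfl⟩
    refine ⟨Finset.Ici ⟨B, by omega⟩, y, hne, ?_, ?_⟩
    · have hv : ((⟨B, by omega⟩ : Fin W) : ℕ) = B := rfl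
      rw [Fin.card_Ici, hv]
      omega
    · have hzero : ∀ w ∈ Finset.Ici (⟨B, by omega⟩ : Fin W), y w = 0 := by
        intro w hw
        rw [Finset.mem_Ici] at hw
        have hw' : B ≤ (w:ℕ) := hw
        simp only [hy]
        rw [if_neg (by omega)]
      have hsum : ∑ w ∈ Finset.Ici (⟨B, by omega⟩ : Fin W), y w = 0 :=
        Finset.sum_eq_zero hzero
      rw [hsum, gt_iff_lt]
      have hsup : (Finset.Ici (⟨B, by omega⟩ : Fin W)).sup' hne
          (fun w => |y w - (R:ℝ)⁻¹ * 0|) ≤ 0 := by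
        apply Finset.sup'_le
        intro w hw
        rw [hzero w hw]
        simp
      calc ρ * _ ≤ ρ * 0 := mul_le_mul_of_nonneg_left hsup hρ
        _ = 0 := mul_zero ρ
        _ < |RAgg y - (R:ℝ)⁻¹ * 0| := by
            rw [mul_zero, sub_zero]; exact abs_pos.mpr hz
end

section
/- Consider distributed softmax regression where each regular worker w ∈ R has local cost f_w as in the standard cross-entropy form and poisoned workers have costs f̃_w with arbitrarily relabeled samples. If all features a^{(w,j)} are entry-wise non-negative, then for all x, max over poisoned workers w of ‖∇f̃_w(x) − ∇f(x)‖ ≤ 2√K · max over all workers w of ‖(1/J)Σ_{j=1}^J a^{(w,j)}‖, where f = (1/R)Σ_{w∈R} f_w. -/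
/-!
The gradient of the cross-entropy of one sample `(a, b)` is `∑ₗ (σₗ - 1{l = b}) • (a placed in
the block of class l)`, where the softmax weights `σₗ` lie in `[0, 1]`; every coefficient thus
lies in `[-1, 1]`, whatever the label. With non-negative features, each coordinate `(l, i)` of a
worker's gradient is therefore bounded in absolute value by coordinate `i` of its mean feature,
so every local gradient, regular or poisoned, has norm at most `√K` times the norm of that mean.
The average `f` of regular costs inherits the bound, and the triangle inequality gives `2√K`.
-/

/-- The per-sample softmax (cross-entropy) loss. -/
noncomputable def softmaxLoss (K d : ℕ) (a : EuclideanSpace ℝ (Fin d)) (b : Fin K)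
    (x : EuclideanSpace ℝ (Fin K × Fin d)) : ℝ :=
  Real.log (∑ l : Fin K, Real.exp (∑ i : Fin d, x (l, i) * a i)) -
    ∑ i : Fin d, x (b, i) * a i

/-- The local cost of a worker with `J` samples `(a j, b j)`. -/
noncomputable def localCost (K d J : ℕ) (a : Fin J → EuclideanSpace ℝ (Fin d))
    (b : Fin J → Fin K) (x : EuclideanSpace ℝ (Fin K × Fin d)) : ℝ :=
  (J : ℝ)⁻¹ * ∑ j : Fin J, softmaxLoss K d (a j) (b j) x



open Real InnerProductSpace
open scoped RealInnerProductSpace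

noncomputable def softmax {ι : Type*} [Fintype ι] (z : ι → ℝ) (l : ι) : ℝ :=
  exp (z l) / ∑ k, exp (z k)

section GradientCalculus

variable {F : Type*} [NormedAddCommGroup F] [InnerProductSpace ℝ F] [CompleteSpace F]
  {f g : F → ℝ} {f' g' x : F}

theorem HasGradientAt.sub (hf : HasGradientAt f f' x) (hg : HasGradientAt g g' x) :
    HasGradientAt (fun y => f y - g y) (f' - g') x := by
  rw [hasGradientAt_iff_hasFDerivAt, map_sub]
  exact hf.hasFDerivAt.sub hg.hasFDerivAt

theorem HasGradientAt.const_mul (c : ℝ) (hf : HasGradientAt f f' x) :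
    HasGradientAt (fun y => c * f y) (c • f') x := by
  rw [hasGradientAt_iff_hasFDerivAt, map_smulₛₗ, starRingEnd_apply, star_trivial]
  exact hf.hasFDerivAt.const_mul c

theorem HasGradientAt.fun_sum {ι : Type*} {s : Finset ι} {f : ι → F → ℝ} {f' : ι → F}
    (h : ∀ i ∈ s, HasGradientAt (f i) (f' i) x) :
    HasGradientAt (fun y => ∑ i ∈ s, f i y) (∑ i ∈ s, f' i) x := by
  rw [hasGradientAt_iff_hasFDerivAt, map_sum]
  exact HasFDerivAt.fun_sum fun i hi => (h i hi).hasFDerivAt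

theorem HasDerivAt.comp_hasGradientAt {h : ℝ → ℝ} {h' : ℝ} (hh : HasDerivAt h h' (f x))
    (hf : HasGradientAt f f' x) : HasGradientAt (fun y => h (f y)) (h' • f') x := by
  rw [hasGradientAt_iff_hasFDerivAt, map_smulₛₗ, starRingEnd_apply, star_trivial]
  exact hh.comp_hasFDerivAt x hf.hasFDerivAt

theorem hasGradientAt_inner_left (u : F) : HasGradientAt (fun y => ⟪u, y⟫) u x := by
  rw [hasGradientAt_iff_hasFDerivAt]
  exact (toDual ℝ F u).hasFDerivAt

end GradientCalculus

theorem softmax_nonneg {ι : Type*} [Fintype ι] (z : ι → ℝ) (l : ι) : 0 ≤ softmax z l := by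
  unfold softmax; positivity

theorem softmax_le_one {ι : Type*} [Fintype ι] (z : ι → ℝ) (l : ι) : softmax z l ≤ 1 :=
  div_le_one_of_le₀ (Finset.single_le_sum (fun k _ => (exp_pos (z k)).le) (Finset.mem_univ l))
    (Finset.sum_nonneg fun k _ => (exp_pos (z k)).le)

theorem hasGradientAt_log_sum_exp_inner {F ι : Type*} [NormedAddCommGroup F]
    [InnerProductSpace ℝ F] [CompleteSpace F] [Fintype ι] [Nonempty ι] (u : ι → F) (x : F) :
    HasGradientAt (fun y => log (∑ l, exp ⟪u l, y⟫)) (∑ l, softmax (fun k => ⟪u k, x⟫) l • u l)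
      x := by
  have hsum : HasGradientAt (fun y => ∑ l, exp ⟪u l, y⟫) (∑ l, exp ⟪u l, x⟫ • u l) x :=
    HasGradientAt.fun_sum fun l _ =>
      (hasDerivAt_exp _).comp_hasGradientAt (hasGradientAt_inner_left (u l))
  have hpos : 0 < ∑ l, exp ⟪u l, x⟫ := Finset.sum_pos (fun l _ => exp_pos _) Finset.univ_nonempty
  convert (hasDerivAt_log hpos.ne').comp_hasGradientAt (f := fun y => ∑ l, exp ⟪u l, y⟫) hsum
    using 1
  simp only [Finset.smul_sum, smul_smul, softmax, div_eq_inv_mul]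

noncomputable def classBlock (K d : ℕ) (a : EuclideanSpace ℝ (Fin d)) (l : Fin K) :
    EuclideanSpace ℝ (Fin K × Fin d) :=
  WithLp.toLp 2 fun p => if p.1 = l then a p.2 else 0

theorem inner_classBlock (K d : ℕ) (a : EuclideanSpace ℝ (Fin d)) (l : Fin K)
    (x : EuclideanSpace ℝ (Fin K × Fin d)) :
    ⟪classBlock K d a l, x⟫ = ∑ i, x (l, i) * a i := by
  simp [classBlock, PiLp.inner_apply, Fintype.sum_prod_type, mul_comm]

noncomputable def softmaxLossGrad (K d : ℕ) (a : EuclideanSpace ℝ (Fin d)) (b : Fin K)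
    (x : EuclideanSpace ℝ (Fin K × Fin d)) : EuclideanSpace ℝ (Fin K × Fin d) :=
  ∑ l, softmax (fun k => ⟪classBlock K d a k, x⟫) l • classBlock K d a l - classBlock K d a b

theorem hasGradientAt_softmaxLoss (K d : ℕ) (a : EuclideanSpace ℝ (Fin d)) (b : Fin K)
    (x : EuclideanSpace ℝ (Fin K × Fin d)) :
    HasGradientAt (softmaxLoss K d a b) (softmaxLossGrad K d a b x) x := by
  have : Nonempty (Fin K) := ⟨b⟩
  have hloss : softmaxLoss K d a b =
      fun y => log (∑ l, exp ⟪classBlock K d a l, y⟫) - ⟪classBlock K d a b, y⟫ := by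
    ext y; simp only [softmaxLoss, inner_classBlock]
  rw [hloss]
  exact (hasGradientAt_log_sum_exp_inner _ x).sub (hasGradientAt_inner_left _)

theorem softmaxLossGrad_apply (K d : ℕ) (a : EuclideanSpace ℝ (Fin d)) (b : Fin K)
    (x : EuclideanSpace ℝ (Fin K × Fin d)) (p : Fin K × Fin d) :
    softmaxLossGrad K d a b x p =
      (softmax (fun k => ⟪classBlock K d a k, x⟫) p.1 - if p.1 = b then 1 else 0) * a p.2 := by
  simp [softmaxLossGrad, classBlock, WithLp.ofLp_sum, Finset.sum_apply, sub_mul, ite_mul]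

theorem abs_softmaxLossGrad_apply_le (K d : ℕ) {a : EuclideanSpace ℝ (Fin d)}
    (ha : ∀ i, 0 ≤ a i) (b : Fin K) (x : EuclideanSpace ℝ (Fin K × Fin d)) (p : Fin K × Fin d) :
    |softmaxLossGrad K d a b x p| ≤ a p.2 := by
  have h0 := softmax_nonneg (fun k => ⟪classBlock K d a k, x⟫) p.1
  have h1 := softmax_le_one (fun k => ⟪classBlock K d a k, x⟫) p.1
  have hcoef :
      |softmax (fun k => ⟪classBlock K d a k, x⟫) p.1 - if p.1 = b then 1 else 0| ≤ 1 := by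
    rw [abs_le]; split_ifs <;> constructor <;> linarith
  rw [softmaxLossGrad_apply, abs_mul, abs_of_nonneg (ha p.2)]
  exact mul_le_of_le_one_left (ha p.2) hcoef

noncomputable def localCostGrad (K d J : ℕ) (a : Fin J → EuclideanSpace ℝ (Fin d))
    (b : Fin J → Fin K) (x : EuclideanSpace ℝ (Fin K × Fin d)) :
    EuclideanSpace ℝ (Fin K × Fin d) :=
  (J : ℝ)⁻¹ • ∑ j, softmaxLossGrad K d (a j) (b j) x

theorem hasGradientAt_localCost (K d J : ℕ) (a : Fin J → EuclideanSpace ℝ (Fin d))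
    (b : Fin J → Fin K) (x : EuclideanSpace ℝ (Fin K × Fin d)) :
    HasGradientAt (localCost K d J a b) (localCostGrad K d J a b x) x :=
  (HasGradientAt.fun_sum fun j _ => hasGradientAt_softmaxLoss K d (a j) (b j) x).const_mul _

theorem abs_localCostGrad_apply_le (K d J : ℕ) {a : Fin J → EuclideanSpace ℝ (Fin d)}
    (ha : ∀ j i, 0 ≤ a j i) (b : Fin J → Fin K) (x : EuclideanSpace ℝ (Fin K × Fin d))
    (p : Fin K × Fin d) :
    |localCostGrad K d J a b x p| ≤ ((J : ℝ)⁻¹ • ∑ j, a j) p.2 := by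
  simp only [localCostGrad, PiLp.smul_apply, smul_eq_mul, WithLp.ofLp_sum, Finset.sum_apply,
    abs_mul, abs_inv, Nat.abs_cast]
  gcongr
  exact (Finset.abs_sum_le_sum_abs _ _).trans
    (Finset.sum_le_sum fun j _ => abs_softmaxLossGrad_apply_le K d (ha j) (b j) x p)

theorem EuclideanSpace.norm_le_sqrt_card_mul_norm_of_abs_apply_le {ι κ : Type*} [Fintype ι]
    [Fintype κ] {v : EuclideanSpace ℝ (ι × κ)} {s : EuclideanSpace ℝ κ}
    (h : ∀ p, |v p| ≤ s p.2) : ‖v‖ ≤ √(Fintype.card ι) * ‖s‖ := by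
  have hsq : ∑ p, ‖v p‖ ^ 2 ≤ Fintype.card ι * ∑ i, ‖s i‖ ^ 2 := calc
    ∑ p, ‖v p‖ ^ 2 ≤ ∑ p : ι × κ, ‖s p.2‖ ^ 2 :=
      Finset.sum_le_sum fun p _ => pow_le_pow_left₀ (norm_nonneg _)
        ((h p).trans (le_abs_self _)) 2
    _ = Fintype.card ι * ∑ i, ‖s i‖ ^ 2 := by
      simp [Fintype.sum_prod_type, Finset.sum_const, Finset.card_univ, nsmul_eq_mul]
  rw [EuclideanSpace.norm_eq, EuclideanSpace.norm_eq, ← sqrt_mul (Nat.cast_nonneg _)]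
  exact sqrt_le_sqrt hsq

theorem norm_localCostGrad_le (K d J : ℕ) {a : Fin J → EuclideanSpace ℝ (Fin d)}
    (ha : ∀ j i, 0 ≤ a j i) (b : Fin J → Fin K) (x : EuclideanSpace ℝ (Fin K × Fin d)) :
    ‖localCostGrad K d J a b x‖ ≤ √K * ‖(J : ℝ)⁻¹ • ∑ j, a j‖ := by
  simpa using EuclideanSpace.norm_le_sqrt_card_mul_norm_of_abs_apply_le
    (abs_localCostGrad_apply_le K d J ha b x)

theorem norm_inv_card_smul_sum_le {E ι : Type*} [SeminormedAddCommGroup E] [NormedSpace ℝ E]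
    {s : Finset ι} (hs : s.Nonempty) {g : ι → E} {B : ℝ} (hg : ∀ i ∈ s, ‖g i‖ ≤ B) :
    ‖(s.card : ℝ)⁻¹ • ∑ i ∈ s, g i‖ ≤ B := by
  have hcard : (0 : ℝ) < s.card := by exact_mod_cast hs.card_pos
  rw [norm_smul, norm_inv, Real.norm_natCast, inv_mul_le_iff₀ hcard]
  simpa using norm_sum_le_of_le s hg

theorem stmt_4_general (K d J Wn : ℕ)
    (Reg : Finset (Fin Wn)) (hReg : Reg.Nonempty)
    (a : Fin Wn → Fin J → EuclideanSpace ℝ (Fin d))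
    (b : Fin Wn → Fin J → Fin K) (bt : Fin Wn → Fin J → Fin K)
    (ha : ∀ w j i, 0 ≤ a w j i)
    (x : EuclideanSpace ℝ (Fin K × Fin d)) (w : Fin Wn) :
    ‖gradient (localCost K d J (a w) (bt w)) x -
        gradient (fun z => (Reg.card : ℝ)⁻¹ * ∑ v ∈ Reg, localCost K d J (a v) (b v) z) x‖ ≤
      2 * Real.sqrt K *
        Finset.univ.sup' (⟨w, Finset.mem_univ w⟩ : (Finset.univ : Finset (Fin Wn)).Nonempty)
          (fun v => ‖(J : ℝ)⁻¹ • ∑ j : Fin J, a v j‖) := by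
  set mean := fun v => ‖(J : ℝ)⁻¹ • ∑ j : Fin J, a v j‖
  set M := Finset.univ.sup' ⟨w, Finset.mem_univ w⟩ mean
  have hgrad : ∀ v (c : Fin J → Fin K), ‖localCostGrad K d J (a v) c x‖ ≤ √K * M := fun v c =>
    (norm_localCostGrad_le K d J (ha v) c x).trans <|
      mul_le_mul_of_nonneg_left (Finset.le_sup' mean (Finset.mem_univ v)) (sqrt_nonneg _)
  have hReg_grad := (HasGradientAt.fun_sum (s := Reg) fun v _ =>
    hasGradientAt_localCost K d J (a v) (b v) x).const_mul (Reg.card : ℝ)⁻¹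
  rw [(hasGradientAt_localCost K d J (a w) (bt w) x).gradient, hReg_grad.gradient]
  calc _ ≤ ‖localCostGrad K d J (a w) (bt w) x‖ +
        ‖(Reg.card : ℝ)⁻¹ • ∑ v ∈ Reg, localCostGrad K d J (a v) (b v) x‖ := norm_sub_le _ _
    _ ≤ √K * M + √K * M :=
      add_le_add (hgrad w (bt w)) (norm_inv_card_smul_sum_le hReg fun v _ => hgrad v (b v))
    _ = 2 * √K * M := by ring

/-- in distributed softmax regression with entry-wise non-negative features,
where regular workers (the set `Reg`) have labels `b` and poisoned workers have arbitrarily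
relabeled samples `bt`, every poisoned worker `w ∉ Reg` satisfies, for all `x`,
`‖∇f̃_w(x) − ∇f(x)‖ ≤ 2√K · max_{v ∈ W} ‖(1/J) Σ_j a^{(v,j)}‖`,
where `f = (1/R) Σ_{v ∈ Reg} f_v`. -/
theorem stmt_4 (K d J Wn : ℕ) (hJ : 1 ≤ J)
    (Reg : Finset (Fin Wn)) (hReg : Reg.Nonempty)
    (a : Fin Wn → Fin J → EuclideanSpace ℝ (Fin d))
    (b : Fin Wn → Fin J → Fin K) (bt : Fin Wn → Fin J → Fin K)
    (ha : ∀ w j i, 0 ≤ a w j i)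
    (x : EuclideanSpace ℝ (Fin K × Fin d)) (w : Fin Wn) (hw : w ∉ Reg) :
    ‖gradient (localCost K d J (a w) (bt w)) x -
        gradient (fun z => (Reg.card : ℝ)⁻¹ * ∑ v ∈ Reg, localCost K d J (a v) (b v) z) x‖ ≤
      2 * Real.sqrt K *
        Finset.univ.sup' (⟨w, Finset.mem_univ w⟩ : (Finset.univ : Finset (Fin Wn)).Nonempty)
          (fun v => ‖(J : ℝ)⁻¹ • ∑ j : Fin J, a v j‖) :=
  stmt_4_general K d J Wn Reg hReg a b bt ha x w
end

section
/- Coordinate-wise trimmed mean satisfies, in each single dimension d, |[TriMean({y_w})]_d − [ȳ]_d| ≤ (3δ/(1−2δ)) · max_{w∈R} |[y_w]_d − [ȳ]_d|, where ȳ is the average of the regular messages, δ = 1 − R/W < 1/2, and in dimension d the W−R smallest and W−R largest values are removed before averaging. -/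
/-- Scalar trimmed mean: sort the `W` values, discard the `W − R` smallest and the `W − R`
largest, and average the remaining `2R − W` values. -/
noncomputable def triMean1 (W R : ℕ) (y : Fin W → ℝ) : ℝ :=
  ((2 * R - W : ℕ) : ℝ)⁻¹ *
    ∑ i ∈ Finset.univ.filter (fun i : Fin W => W - R ≤ (i : ℕ) ∧ (i : ℕ) < R),
      y (Tuple.sort y i)

/-!
Let `K` be the set of (original) indices whose values survive the trimming, so `#K = 2R − W`.
Since at most `W − R` values are irregular, each surviving value has a regular value below it
among the `W − R + 1` smallest and a regular value above it among the `W − R + 1` largest,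
hence deviates from `ȳ` by at most `M = max_{w ∈ Reg} |y w − ȳ|`. The regular deviations sum
to zero, so `∑_{K} (y − ȳ) = ∑_{K \ Reg} (y − ȳ) − ∑_{Reg \ K} (y − ȳ)`, and counting gives
`#(K \ Reg) + #(Reg \ K) ≤ 3(W − R)`. Dividing by `2R − W` yields the factor
`3(W − R)/(2R − W) = 3δ/(1 − 2δ)`.
-/

open Finset

section TupleSort

variable {n : ℕ} {α : Type*} [LinearOrder α] (f : Fin n → α) (S : Finset (Fin n))

theorem exists_le_apply_sort_of_card_compl_le {i : Fin n} (h : #Sᶜ ≤ i) :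
    ∃ w ∈ S, f w ≤ f (Tuple.sort f i) := by
  have hlt : #Sᶜ < #((Iic i).map (Tuple.sort f).toEmbedding) := by
    rw [card_map, Fin.card_Iic]; omega
  obtain ⟨_, hj, hjS⟩ := exists_mem_notMem_of_card_lt_card hlt
  obtain ⟨j, hji, rfl⟩ := mem_map.mp hj
  exact ⟨_, by simpa using hjS, Tuple.monotone_sort f (mem_Iic.mp hji)⟩

theorem exists_apply_sort_le_of_card_compl_lt {i : Fin n} (h : #Sᶜ < n - i) :
    ∃ w ∈ S, f (Tuple.sort f i) ≤ f w := by
  have hlt : #Sᶜ < #((Ici i).map (Tuple.sort f).toEmbedding) := by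
    rw [card_map, Fin.card_Ici]; omega
  obtain ⟨_, hj, hjS⟩ := exists_mem_notMem_of_card_lt_card hlt
  obtain ⟨j, hij, rfl⟩ := mem_map.mp hj
  exact ⟨_, by simpa using hjS, Tuple.monotone_sort f (mem_Ici.mp hij)⟩

end TupleSort

theorem abs_sum_le_of_sum_eq_zero {ι α : Type*} [DecidableEq ι] [CommRing α] [LinearOrder α]
    [IsOrderedRing α] {K S : Finset ι} {g : ι → α} {M : α} (hS : ∑ i ∈ S, g i = 0) (hKM : ∀ i ∈ K, |g i| ≤ M)
    (hSM : ∀ i ∈ S, |g i| ≤ M) :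
    |∑ i ∈ K, g i| ≤ (#(K \ S) + #(S \ K)) * M := by
  have hsplit : ∑ i ∈ K, g i = ∑ i ∈ K \ S, g i - ∑ i ∈ S \ K, g i := by
    rw [sum_sdiff_sub_sum_sdiff, hS, sub_zero]
  have bound : ∀ T ⊆ K ∪ S, |∑ i ∈ T, g i| ≤ #T * M := fun T hT =>
    (abs_sum_le_sum_abs g T).trans <| by
      simpa using sum_le_card_nsmul T _ M fun i hi =>
        (mem_union.mp (hT hi)).elim (hKM i) (hSM i)
  calc |∑ i ∈ K, g i|
      ≤ |∑ i ∈ K \ S, g i| + |∑ i ∈ S \ K, g i| := hsplit ▸ abs_sub _ _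
    _ ≤ #(K \ S) * M + #(S \ K) * M :=
        add_le_add (bound _ (sdiff_subset.trans subset_union_left))
          (bound _ (sdiff_subset.trans subset_union_right))
    _ = (#(K \ S) + #(S \ K)) * M := by ring

theorem card_sdiff_add_card_sdiff_add_card_le {ι : Type*} [Fintype ι] [DecidableEq ι]
    (K S : Finset ι) : #(K \ S) + #(S \ K) + #K ≤ 2 * Fintype.card ι - #S := by
  have hKS : #(K \ S) ≤ #Sᶜ := card_le_card fun i hi => mem_compl.mpr (mem_sdiff.mp hi).2
  have hK := card_sdiff_add_card_inter K S
  have hS := card_sdiff_add_card_inter S K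
  have := card_le_univ S
  rw [card_compl] at hKS
  rw [inter_comm] at hS
  omega

theorem sum_sub_average_eq_zero {ι K : Type*} [DivisionRing K] [CharZero K] {s : Finset ι}
    (hs : s.Nonempty) (f : ι → K) : ∑ i ∈ s, (f i - (#s : K)⁻¹ * ∑ j ∈ s, f j) = 0 := by
  have hcard : (#s : K) ≠ 0 := by simpa using hs.ne_empty
  rw [sum_sub_distrib, sum_const, nsmul_eq_mul, mul_inv_cancel_left₀ hcard, sub_self]

theorem three_mul_one_sub_div_div_eq {K : Type*} [Field K] {r w : K} (hw : w ≠ 0) :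
    3 * (1 - r / w) / (1 - 2 * (1 - r / w)) = 3 * (w - r) / (2 * r - w) := by
  rw [one_sub_div hw, show 1 - 2 * ((w - r) / w) = (2 * r - w) / w by field_simp; ring,
    mul_div_assoc', div_div_div_cancel_right₀ hw]

section KeptIndices

noncomputable def keptIndices (W R : ℕ) (y : Fin W → ℝ) : Finset (Fin W) :=
  (univ.filter fun i : Fin W => W - R ≤ (i : ℕ) ∧ (i : ℕ) < R).map
    (Tuple.sort y).toEmbedding

variable {W R : ℕ} {y : Fin W → ℝ}

theorem card_keptIndices (hRW : R ≤ W) : #(keptIndices W R y) = 2 * R - W := by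
  have himg : (univ.filter fun i : Fin W => W - R ≤ (i : ℕ) ∧ (i : ℕ) < R).map
      Fin.valEmbedding = Ico (W - R) R := by
    ext m
    simp only [mem_map, mem_filter, mem_univ, true_and, Fin.valEmbedding_apply, mem_Ico]
    exact ⟨fun ⟨i, hi, him⟩ => him ▸ hi,
      fun hm => ⟨⟨m, hm.2.trans_le hRW⟩, hm, rfl⟩⟩
  rw [keptIndices, card_map, ← card_map Fin.valEmbedding, himg, Nat.card_Ico]
  omega

theorem card_sdiff_keptIndices_add_card_sdiff_le {S : Finset (Fin W)} (hS : #S = R) :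
    #(keptIndices W R y \ S) + #(S \ keptIndices W R y) ≤ 3 * (W - R) := by
  have hRW : R ≤ W := hS ▸ (card_le_univ S).trans_eq (Fintype.card_fin W)
  have := card_sdiff_add_card_sdiff_add_card_le (keptIndices W R y) S
  rw [card_keptIndices hRW, hS, Fintype.card_fin] at this
  omega

theorem triMean1_sub_eq_sum_div (hRW : R ≤ W) (h2 : W < 2 * R) (c : ℝ) :
    triMean1 W R y - c = (∑ j ∈ keptIndices W R y, (y j - c)) / (2 * R - W) := by
  have hcast : ((2 * R - W : ℕ) : ℝ) = 2 * R - W := by push_cast [Nat.cast_sub h2.le]; ring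
  have hpos : ((2 * R - W : ℕ) : ℝ) ≠ 0 := by exact_mod_cast (by omega : 2 * R - W ≠ 0)
  rw [sum_sub_distrib, sum_const, card_keptIndices hRW, nsmul_eq_mul, triMean1, keptIndices,
    sum_map, ← hcast]
  field_simp
  rfl

theorem abs_sub_le_of_mem_keptIndices {S : Finset (Fin W)} (hS : #S = R) {c M : ℝ}
    (hSM : ∀ w ∈ S, |y w - c| ≤ M) {j : Fin W} (hj : j ∈ keptIndices W R y) :
    |y j - c| ≤ M := by
  obtain ⟨i, hi, rfl⟩ := mem_map.mp hj
  obtain ⟨hlo, hhi⟩ := (mem_filter.mp hi).2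
  have hcompl : #Sᶜ = W - R := by rw [card_compl, hS, Fintype.card_fin]
  obtain ⟨a, ha, hya⟩ := exists_le_apply_sort_of_card_compl_le y S (hcompl ▸ hlo)
  have hcompl_lt : #Sᶜ < W - i := by have := i.isLt; omega
  obtain ⟨b, hb, hyb⟩ := exists_apply_sort_le_of_card_compl_lt y S hcompl_lt
  have ha' := abs_le.mp (hSM a ha)
  have hb' := abs_le.mp (hSM b hb)
  show |y (Tuple.sort y i) - c| ≤ M
  exact abs_le.mpr ⟨by linarith [ha'.1], by linarith [hb'.2]⟩

end KeptIndices

theorem stmt_9_general (W R : ℕ) (h2 : W < 2 * R)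
    (Reg : Finset (Fin W)) (hReg : Reg.Nonempty) (hcard : Reg.card = R)
    (y : Fin W → ℝ) :
    |triMean1 W R y - (R : ℝ)⁻¹ * ∑ w ∈ Reg, y w| ≤
      3 * (1 - (R : ℝ) / W) / (1 - 2 * (1 - (R : ℝ) / W)) *
        Reg.sup' hReg (fun w => |y w - (R : ℝ)⁻¹ * ∑ v ∈ Reg, y v|) := by
  set ybar := (R : ℝ)⁻¹ * ∑ w ∈ Reg, y w
  set M := Reg.sup' hReg fun w => |y w - ybar|
  set K := keptIndices W R y
  have hRW : R ≤ W := hcard ▸ (card_le_univ Reg).trans_eq (Fintype.card_fin W)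
  have hM : ∀ w ∈ Reg, |y w - ybar| ≤ M := fun w hw => le_sup' (fun w => |y w - ybar|) hw
  have hden : (0 : ℝ) < 2 * R - W := by
    have : (W : ℝ) < 2 * R := by exact_mod_cast h2
    linarith
  have hcount : (#(K \ Reg) + #(Reg \ K) : ℝ) ≤ 3 * (W - R) := by
    have := card_sdiff_keptIndices_add_card_sdiff_le (y := y) hcard
    rw [← Nat.cast_sub hRW]
    exact_mod_cast this
  calc |triMean1 W R y - ybar| = |∑ j ∈ K, (y j - ybar)| / (2 * R - W) := by
        rw [triMean1_sub_eq_sum_div hRW h2, abs_div, abs_of_pos hden]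
    _ ≤ (#(K \ Reg) + #(Reg \ K)) * M / (2 * R - W) := by
        gcongr
        exact abs_sum_le_of_sum_eq_zero
          (by simpa only [hcard] using sum_sub_average_eq_zero hReg y)
          (fun j hj => abs_sub_le_of_mem_keptIndices hcard hM hj) hM
    _ ≤ 3 * (W - R) * M / (2 * R - W) := by
        gcongr
        exact (abs_nonneg _).trans (hM _ hReg.choose_spec)
    _ = _ := by
        have hW : (W : ℝ) ≠ 0 := by exact_mod_cast (by omega : W ≠ 0)
        rw [three_mul_one_sub_div_div_eq hW, div_mul_eq_mul_div]

/-- in a single dimension, the trimmed mean satisfies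
`|TriMean(y) − ȳ| ≤ (3δ/(1−2δ)) · max_{w ∈ Reg} |y w − ȳ|`, with `δ = 1 − R/W < 1/2`
and `ȳ` the average of the regular messages. -/
theorem stmt_9 (W R : ℕ) (hRW : R ≤ W) (h2 : W < 2 * R)
    (Reg : Finset (Fin W)) (hReg : Reg.Nonempty) (hcard : Reg.card = R)
    (y : Fin W → ℝ) :
    |triMean1 W R y - (R : ℝ)⁻¹ * ∑ w ∈ Reg, y w| ≤
      3 * (1 - (R : ℝ) / W) / (1 - 2 * (1 - (R : ℝ) / W)) *
        Reg.sup' hReg (fun w => |y w - (R : ℝ)⁻¹ * ∑ v ∈ Reg, y v|) :=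
  stmt_9_general W R h2 Reg hReg hcard y
end

section
/- One-step centered clipping: Let y_1,...,y_W ∈ R^D with regular set R of size R = (1−δ)W, δ < 1/2, ȳ = (1/R)Σ_{w∈R} y_w. Let v_0 satisfy ‖v_0 − ȳ‖² ≤ max_{w∈R}‖y_w − ȳ‖² and set τ = sqrt(4(1−δ) max_{w∈R}‖y_w − ȳ‖² / δ). Then the output CC = v_0 + (1/W)Σ_{w=1}^W CLIP(y_w − v_0, τ) satisfies ‖CC − ȳ‖ ≤ √(24δ) · max_{w∈R} ‖y_w − ȳ‖. -/
/-!
On the regular workers the clipping is inactive, since `‖y w - v₀‖ ≤ 2M ≤ τ` (this is where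
`δ < 1/2` enters), so their clipped contributions average exactly to `(1 - δ)(ybar - v₀)`. Hence the
error `CC - ybar` is `δ (v₀ - ybar)` plus `1/W` times the sum of the `δW` clipped poisoned vectors,
each of norm at most `τ`, giving `‖CC - ybar‖ ≤ δ (M + τ)`; the choice of `τ` makes this `≤ √(24δ) M`.
-/

open Finset

noncomputable def clip {E : Type*} [NormedAddCommGroup E] [NormedSpace ℝ E]
    (z : E) (τ : ℝ) : E :=
  if ‖z‖ ≤ τ then z else (τ / ‖z‖) • z

section Clip

variable {E : Type*} [NormedAddCommGroup E] [NormedSpace ℝ E]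

theorem clip_of_norm_le {z : E} {τ : ℝ} (h : ‖z‖ ≤ τ) : clip z τ = z := if_pos h

theorem norm_clip_le (z : E) {τ : ℝ} (hτ : 0 ≤ τ) : ‖clip z τ‖ ≤ τ := by
  unfold clip
  split_ifs with h
  · exact h
  · have hz : 0 < ‖z‖ := hτ.trans_lt (not_le.mp h)
    rw [norm_smul, Real.norm_of_nonneg (div_nonneg hτ hz.le), div_mul_cancel₀ _ hz.ne']

theorem norm_sum_clip_le {ι : Type*} (s : Finset ι) (f : ι → E) {τ : ℝ} (hτ : 0 ≤ τ) :
    ‖∑ i ∈ s, clip (f i) τ‖ ≤ #s * τ := by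
  simpa using norm_sum_le_of_le s fun i _ => norm_clip_le (f i) hτ

end Clip

section CenteredClip

variable {ι E : Type*} [Fintype ι] [DecidableEq ι] [NormedAddCommGroup E] [NormedSpace ℝ E]

noncomputable def centeredClip (y : ι → E) (v₀ : E) (τ : ℝ) : E :=
  v₀ + (Fintype.card ι : ℝ)⁻¹ • ∑ w, clip (y w - v₀) τ

theorem centeredClip_sub_eq [Nonempty ι] {Reg : Finset ι} {y : ι → E} {v₀ ybar : E} {τ : ℝ}
    (hmean : ∑ w ∈ Reg, y w = (#Reg : ℝ) • ybar) (hreg : ∀ w ∈ Reg, ‖y w - v₀‖ ≤ τ) :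
    centeredClip y v₀ τ - ybar = (#Regᶜ / Fintype.card ι : ℝ) • (v₀ - ybar) +
      (Fintype.card ι : ℝ)⁻¹ • ∑ w ∈ Regᶜ, clip (y w - v₀) τ := by
  have hN : (Fintype.card ι : ℝ) ≠ 0 := by positivity
  have hcard : (#Reg : ℝ) = Fintype.card ι - #Regᶜ := by
    rw [← card_compl_add_card Reg]; push_cast; ring
  have hsumReg : ∑ w ∈ Reg, clip (y w - v₀) τ = (#Reg : ℝ) • (ybar - v₀) := by
    rw [sum_congr rfl fun w hw => clip_of_norm_le (hreg w hw), sum_sub_distrib, hmean,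
      sum_const, ← Nat.cast_smul_eq_nsmul ℝ, smul_sub]
  rw [centeredClip, ← sum_add_sum_compl Reg, hsumReg, hcard, smul_add, smul_smul,
    mul_sub, inv_mul_cancel₀ hN, div_eq_inv_mul]
  module

theorem norm_centeredClip_sub_le [Nonempty ι] {Reg : Finset ι} {y : ι → E} {v₀ ybar : E} {τ : ℝ}
    (hτ : 0 ≤ τ) (hmean : ∑ w ∈ Reg, y w = (#Reg : ℝ) • ybar) (hreg : ∀ w ∈ Reg, ‖y w - v₀‖ ≤ τ) :
    ‖centeredClip y v₀ τ - ybar‖ ≤ (#Regᶜ / Fintype.card ι : ℝ) * (‖v₀ - ybar‖ + τ) := by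
  rw [centeredClip_sub_eq hmean hreg]
  calc _ ≤ ‖(#Regᶜ / Fintype.card ι : ℝ) • (v₀ - ybar)‖ +
        ‖(Fintype.card ι : ℝ)⁻¹ • ∑ w ∈ Regᶜ, clip (y w - v₀) τ‖ := norm_add_le _ _
    _ ≤ #Regᶜ / Fintype.card ι * ‖v₀ - ybar‖ + (Fintype.card ι : ℝ)⁻¹ * (#Regᶜ * τ) := by
        rw [norm_smul, norm_smul, Real.norm_of_nonneg (by positivity),
          Real.norm_of_nonneg (by positivity)]
        gcongr
        exact norm_sum_clip_le _ _ hτ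
    _ = _ := by ring

end CenteredClip

theorem two_mul_le_sqrt_clipThreshold {δ M : ℝ} (hδ0 : 0 < δ) (hδ : δ ≤ 1 / 2) :
    2 * M ≤ √(4 * (1 - δ) * M ^ 2 / δ) := by
  apply Real.le_sqrt_of_sq_le
  rw [le_div_iff₀ hδ0]
  nlinarith [sq_nonneg M]

theorem mul_add_sqrt_clipThreshold_le {δ M : ℝ} (hδ0 : 0 < δ) (hδ : δ ≤ 1) (hM : 0 ≤ M) :
    δ * (M + √(4 * (1 - δ) * M ^ 2 / δ)) ≤ √(24 * δ) * M := by
  set τ := √(4 * (1 - δ) * M ^ 2 / δ)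
  have hτ : δ * τ ^ 2 = 4 * (1 - δ) * M ^ 2 := by
    rw [Real.sq_sqrt (by positivity)]; field_simp
  rw [show √(24 * δ) * M = √(24 * δ * M ^ 2) by
    rw [Real.sqrt_mul' _ (sq_nonneg M), Real.sqrt_sq hM]]
  apply Real.le_sqrt_of_sq_le
  -- `(M + τ)² ≤ 2 (M² + τ²)`, and `δ τ² = 4 (1 - δ) M²` is at most `4 M²`
  nlinarith [sq_nonneg (M - τ), mul_pos hδ0 hδ0]

/-- one-step centered clipping. With regular set `Reg` of size `R = (1−δ)W`,
`0 < δ < 1/2`, starting point `v0` with `‖v0 − ȳ‖² ≤ M² = max_{w∈Reg}‖y w − ȳ‖²`, and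
clipping threshold `τ = √(4(1−δ)M²/δ)`, the output
`CC = v0 + (1/W) Σ_w CLIP(y w − v0, τ)` satisfies `‖CC − ȳ‖ ≤ √(24δ) · M`. -/
theorem stmt_10 (W R D : ℕ) (δ : ℝ) (hδ0 : 0 < δ) (hδ : δ < 1 / 2)
    (hR : (R : ℝ) = (1 - δ) * W)
    (Reg : Finset (Fin W)) (hReg : Reg.Nonempty) (hcard : Reg.card = R)
    (y : Fin W → EuclideanSpace ℝ (Fin D)) (v0 ybar : EuclideanSpace ℝ (Fin D))
    (hybar : ybar = (R : ℝ)⁻¹ • ∑ w ∈ Reg, y w)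
    (M : ℝ) (hM : M = Reg.sup' hReg fun w => ‖y w - ybar‖)
    (hv0 : ‖v0 - ybar‖ ^ 2 ≤ M ^ 2)
    (τ : ℝ) (hτ : τ = Real.sqrt (4 * (1 - δ) * M ^ 2 / δ)) :
    ‖v0 + (W : ℝ)⁻¹ • ∑ w : Fin W, clip (y w - v0) τ - ybar‖ ≤
      Real.sqrt (24 * δ) * M := by
  have : Nonempty (Fin W) := ⟨hReg.choose⟩
  have hRpos : (R : ℝ) ≠ 0 := by rw [← hcard]; exact_mod_cast hReg.card_pos.ne'
  have hMle : ∀ w ∈ Reg, ‖y w - ybar‖ ≤ M := fun w hw => hM ▸ le_sup' (fun w => ‖y w - ybar‖) hw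
  have hM0 : 0 ≤ M := (norm_nonneg _).trans (hMle _ hReg.choose_spec)
  have hv0M : ‖v0 - ybar‖ ≤ M := (pow_le_pow_iff_left₀ (norm_nonneg _) hM0 two_ne_zero).mp hv0
  have hτ0 : 0 ≤ τ := hτ ▸ Real.sqrt_nonneg _
  have hreg : ∀ w ∈ Reg, ‖y w - v0‖ ≤ τ := fun w hw =>
    calc ‖y w - v0‖ ≤ ‖y w - ybar‖ + ‖ybar - v0‖ := norm_sub_le_norm_sub_add_norm_sub ..
      _ ≤ 2 * M := by rw [norm_sub_rev ybar]; linarith [hMle w hw]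
      _ ≤ τ := hτ ▸ two_mul_le_sqrt_clipThreshold hδ0 hδ.le
  have hmean : ∑ w ∈ Reg, y w = (#Reg : ℝ) • ybar := by
    rw [hybar, hcard, smul_smul, mul_inv_cancel₀ hRpos, one_smul]
  have hbyz : (#Regᶜ / Fintype.card (Fin W) : ℝ) = δ := by
    have hsplit : (#Regᶜ + R : ℝ) = W := by
      exact_mod_cast hcard ▸ Fintype.card_fin W ▸ card_compl_add_card Reg
    have hW : (W : ℝ) ≠ 0 := by simpa using Fintype.card_ne_zero (α := Fin W)
    rw [Fintype.card_fin, div_eq_iff hW]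
    linarith
  have hCC := norm_centeredClip_sub_le hτ0 hmean hreg
  rw [hbyz, centeredClip, Fintype.card_fin] at hCC
  calc _ ≤ δ * (‖v0 - ybar‖ + τ) := hCC
    _ ≤ δ * (M + τ) := by gcongr
    _ ≤ √(24 * δ) * M := hτ ▸ mul_add_sqrt_clipThreshold_le hδ0 (by linarith) hM0
end

section
/- In the FABA analysis, at any iteration i with remaining set U^{(i)}, if a regular worker attains the maximum distance to the current average ȳ_{U^{(i)}} (i.e., is removed), then ‖ȳ_{R^{(i)}} − ȳ_{P^{(i)}}‖ ≤ (1/(1−2u_i)) max_{w∈R} ‖y_w − ȳ_{R^{(i)}}‖, where R^{(i)} and P^{(i)} are the regular and poisoned workers remaining in U^{(i)}, u_i = |P^{(i)}|/|U^{(i)}| < 1/2, and ȳ_{R^{(i)}}, ȳ_{P^{(i)}} are their averages. -/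
/-!
The current average `ȳ_U = (1 - u) ȳ_R + u ȳ_P` lies on the segment from `ȳ_R` to `ȳ_P`, at
distance `u ‖ȳ_R - ȳ_P‖` from `ȳ_R` and `(1 - u) ‖ȳ_R - ȳ_P‖` from `ȳ_P`. The average `ȳ_P` lies
in the convex hull of the poisoned points, so it is no farther from `ȳ_U` than the farthest of
them, hence no farther than the removed regular worker `w⋆`. The triangle inequality through
`ȳ_R` then gives `(1 - u) ‖ȳ_R - ȳ_P‖ ≤ ‖y_{w⋆} - ȳ_R‖ + u ‖ȳ_R - ȳ_P‖`.
-/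

open Finset

section

variable {ι E : Type*} [SeminormedAddCommGroup E] [NormedSpace ℝ E]

noncomputable def avg (s : Finset ι) (y : ι → E) : E := (#s : ℝ)⁻¹ • ∑ i ∈ s, y i

theorem card_smul_avg (s : Finset ι) (y : ι → E) : (#s : ℝ) • avg s y = ∑ i ∈ s, y i := by
  rcases s.eq_empty_or_nonempty with rfl | hs
  · simp
  · rw [avg, smul_inv_smul₀ (by exact_mod_cast hs.card_pos.ne')]

theorem Convex.avg_mem {C : Set E} (hC : Convex ℝ C) {s : Finset ι} (hs : s.Nonempty)
    {y : ι → E} (hy : ∀ i ∈ s, y i ∈ C) : avg s y ∈ C := by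
  have := hC.centerMass_mem (w := fun _ ↦ (1 : ℝ)) (fun _ _ ↦ zero_le_one)
    (by simpa using hs.card_pos) hy
  simpa [Finset.centerMass, avg] using this

theorem norm_avg_sub_le {s : Finset ι} (hs : s.Nonempty) {y : ι → E} {c : E} {R : ℝ}
    (hy : ∀ i ∈ s, ‖y i - c‖ ≤ R) : ‖avg s y - c‖ ≤ R := by
  simpa [Metric.mem_closedBall, dist_eq_norm] using
    (convex_closedBall c R).avg_mem hs (fun i hi ↦ by simpa [dist_eq_norm] using hy i hi)

theorem avg_sub_avg_union [DecidableEq ι] {s t : Finset ι} (hst : Disjoint s t) (y : ι → E) :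
    avg s y - avg (s ∪ t) y = (#t / #(s ∪ t) : ℝ) • (avg s y - avg t y) := by
  rcases eq_or_ne (#(s ∪ t) : ℝ) 0 with hn | hn
  · obtain ⟨rfl, rfl⟩ := union_eq_empty.1 (card_eq_zero.1 (by exact_mod_cast hn))
    simp [avg]
  apply smul_right_injective E hn
  dsimp only
  rw [smul_sub, card_smul_avg, sum_union hst, ← card_smul_avg s, ← card_smul_avg t, smul_smul,
    mul_div_cancel₀ _ hn, card_union_of_disjoint hst]
  push_cast
  module

theorem one_sub_two_mul_mul_norm_sub_le {a b m z : E} {u : ℝ} (hu0 : 0 ≤ u) (hu1 : u ≤ 1)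
    (ham : a - m = u • (a - b)) (hbm : ‖b - m‖ ≤ ‖z - m‖) :
    (1 - 2 * u) * ‖a - b‖ ≤ ‖z - a‖ := by
  have hb : b - m = (1 - u) • (b - a) := by
    rw [show b - m = (b - a) + (a - m) by abel, ham]
    module
  have hzm : ‖z - m‖ ≤ ‖z - a‖ + u * ‖a - b‖ := by
    calc ‖z - m‖ ≤ ‖z - a‖ + ‖a - m‖ := norm_sub_le_norm_sub_add_norm_sub _ _ _
      _ = ‖z - a‖ + u * ‖a - b‖ := by rw [ham, norm_smul, Real.norm_of_nonneg hu0]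
  rw [hb, norm_smul, Real.norm_of_nonneg (by linarith), norm_sub_rev] at hbm
  linarith

end

theorem stmt_13_general (W D : ℕ) (y : Fin W → EuclideanSpace ℝ (Fin D))
    (Reg U : Finset (Fin W)) (hReg : Reg.Nonempty)
    (hPne : (U \ Reg).Nonempty)
    (hu : ((U \ Reg).card : ℝ) / U.card < 1 / 2)
    (wstar : Fin W) (hws : wstar ∈ U ∩ Reg)
    (hmax : ∀ v ∈ U, ‖y v - (U.card : ℝ)⁻¹ • ∑ u ∈ U, y u‖ ≤
      ‖y wstar - (U.card : ℝ)⁻¹ • ∑ u ∈ U, y u‖) :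
    ‖((U ∩ Reg).card : ℝ)⁻¹ • ∑ w ∈ U ∩ Reg, y w -
        ((U \ Reg).card : ℝ)⁻¹ • ∑ w ∈ U \ Reg, y w‖ ≤
      (1 - 2 * (((U \ Reg).card : ℝ) / U.card))⁻¹ *
        Reg.sup' hReg (fun w => ‖y w - ((U ∩ Reg).card : ℝ)⁻¹ • ∑ v ∈ U ∩ Reg, y v‖) := by
  change ‖avg (U ∩ Reg) y - avg (U \ Reg) y‖ ≤ _ * Reg.sup' hReg (‖y · - avg (U ∩ Reg) y‖)
  set u : ℝ := #(U \ Reg) / #U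
  have hsplit : avg (U ∩ Reg) y - avg U y = u • (avg (U ∩ Reg) y - avg (U \ Reg) y) := by
    have hU : U ∩ Reg ∪ U \ Reg = U := sup_inf_sdiff U Reg
    simpa only [hU] using avg_sub_avg_union (disjoint_sdiff_inter U Reg).symm y
  have hpoisoned : ‖avg (U \ Reg) y - avg U y‖ ≤ ‖y wstar - avg U y‖ :=
    norm_avg_sub_le hPne fun v hv ↦ hmax v (mem_sdiff.1 hv).1
  have hu0 : 0 ≤ u := by positivity
  rw [le_inv_mul_iff₀ (by linarith)]
  calc (1 - 2 * u) * ‖avg (U ∩ Reg) y - avg (U \ Reg) y‖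
      ≤ ‖y wstar - avg (U ∩ Reg) y‖ :=
        one_sub_two_mul_mul_norm_sub_le hu0 (by linarith) hsplit hpoisoned
    _ ≤ _ := le_sup' (‖y · - avg (U ∩ Reg) y‖) (mem_inter.1 hws).2

/-- in the FABA analysis, with remaining set `U`, remaining regular workers
`U ∩ Reg`, remaining poisoned workers `U \ Reg`, and remaining poisoned fraction
`u = |U \ Reg| / |U| < 1/2`, if a regular worker `wstar ∈ U ∩ Reg` attains the maximum
distance to the current average `ȳ_U`, then
`‖ȳ_{U∩Reg} − ȳ_{U\Reg}‖ ≤ (1/(1−2u)) · max_{w ∈ Reg} ‖y w − ȳ_{U∩Reg}‖`. -/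
theorem stmt_13 (W D : ℕ) (y : Fin W → EuclideanSpace ℝ (Fin D))
    (Reg U : Finset (Fin W)) (hReg : Reg.Nonempty)
    (hRne : (U ∩ Reg).Nonempty) (hPne : (U \ Reg).Nonempty)
    (hu : ((U \ Reg).card : ℝ) / U.card < 1 / 2)
    (wstar : Fin W) (hws : wstar ∈ U ∩ Reg)
    (hmax : ∀ v ∈ U, ‖y v - (U.card : ℝ)⁻¹ • ∑ u ∈ U, y u‖ ≤
      ‖y wstar - (U.card : ℝ)⁻¹ • ∑ u ∈ U, y u‖) :
    ‖((U ∩ Reg).card : ℝ)⁻¹ • ∑ w ∈ U ∩ Reg, y w -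
        ((U \ Reg).card : ℝ)⁻¹ • ∑ w ∈ U \ Reg, y w‖ ≤
      (1 - 2 * (((U \ Reg).card : ℝ) / U.card))⁻¹ *
        Reg.sup' hReg (fun w => ‖y w - ((U ∩ Reg).card : ℝ)⁻¹ • ∑ v ∈ U ∩ Reg, y v‖) :=
  stmt_13_general W D y Reg U hReg hPne hu wstar hws hmax
end
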